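/- Define f : ℝ → ℝ by f(x) = |x| if |x| ≤ 1 and f(x) = 1 if |x| > 1, and let W : ℝ → ℝ be the 1-periodic function with W(y) = 1/2 − |y| for y ∈ [−1/2, 1/2]. Then for every ε ∈ (0,1), every t > 0, and every absolutely continuous curve η : [0,t] → ℝ, one has ∫₀ᵗ ( f(η(s)) + W(η(s)/ε) + |η̇(s)|²/2 ) ds ≥ ε t / 2. -/

import Mathlib

/-! The bound is pointwise: `f(x) + W(x/ε) ≥ ε/2` for every `x`. Far from the origin
(`|x| ≥ ε/2`) the term `f` alone pays `ε/2`, since `W ≥ 0`; near it, `W(x/ε) = 1/2 - |x|/ε`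
and the two terms together still pay `ε/2`. Integrating over `[0,t]` gives `εt/2`. -/

open MeasureTheory Real Set

noncomputable section

/-- `f(x) = |x|` for `|x| ≤ 1`, and `f(x) = 1` for `|x| > 1`. -/
def f (x : ℝ) : ℝ := if |x| ≤ 1 then |x| else 1

/-- The 1-periodic extension of `y ↦ 1/2 − |y|` from `[−1/2, 1/2]`; equivalently
`W(y) = 1/2 − dist(y, ℤ)`. -/
def W (y : ℝ) : ℝ := 1/2 - |y - round y|

/-- `η : [a,b] → ℝ` is absolutely continuous with (a.e.) derivative `η'`. -/
def IsAC1 (a b : ℝ) (η η' : ℝ → ℝ) : Prop :=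
  IntegrableOn η' (Icc a b) volume ∧
    ∀ c d : ℝ, a ≤ c → c ≤ d → d ≤ b → η d - η c = ∫ s in c..d, η' s

lemma f_eq_min (x : ℝ) : f x = min |x| 1 := by
  unfold f
  split_ifs with h
  · exact (min_eq_left h).symm
  · exact (min_eq_right (not_le.mp h).le).symm

lemma W_nonneg (y : ℝ) : 0 ≤ W y := by
  unfold W
  linarith [abs_sub_round y]

lemma half_sub_abs_le_W (y : ℝ) : 1 / 2 - |y| ≤ W y := by
  unfold W
  linarith [show |y - round y| ≤ |y| by simpa using round_le y 0]

lemma half_le_f_add_W {ε : ℝ} (hε : 0 < ε) (hε1 : ε ≤ 1) (x : ℝ) :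
    ε / 2 ≤ f x + W (x / ε) := by
  rw [f_eq_min]
  rcases lt_or_ge |x| (ε / 2) with hnear | hfar
  · have hW : 1 / 2 - |x| / ε ≤ W (x / ε) := by
      simpa [abs_div, abs_of_pos hε] using half_sub_abs_le_W (x / ε)
    have hεW : ε / 2 - |x| ≤ ε * W (x / ε) := by
      have := mul_le_mul_of_nonneg_left hW hε.le
      rwa [mul_sub, mul_div_cancel₀ _ hε.ne', mul_one_div] at this
    rw [min_eq_left (by linarith)]
    -- `ε (|x| + W(x/ε) - ε/2) ≥ (1 - ε)(ε/2 - |x|) ≥ 0`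
    nlinarith [mul_nonneg (sub_nonneg.mpr hε1) (sub_nonneg.mpr hnear.le)]
  · have hf : ε / 2 ≤ min |x| 1 := le_min hfar (by linarith)
    linarith [W_nonneg (x / ε)]

/-- Proposition 4.4(i) (variational content): every admissible curve pays cost at
least `εt/2` on `[0,t]`.  The cost integral is taken in `[0,∞]` since the integrand
is nonnegative. -/
theorem stmt_11 :
    ∀ ε : ℝ, 0 < ε → ε < 1 → ∀ t : ℝ, 0 < t →
      ∀ η η' : ℝ → ℝ, IsAC1 0 t η η' →
        ENNReal.ofReal (ε * t / 2) ≤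
          ∫⁻ s in Icc (0:ℝ) t,
            ENNReal.ofReal (f (η s) + W (η s / ε) + |η' s| ^ 2 / 2) := by
  intro ε hε hε1 t _ η η' _
  calc ENNReal.ofReal (ε * t / 2)
      = ∫⁻ _ in Icc (0:ℝ) t, ENNReal.ofReal (ε / 2) := by
        rw [setLIntegral_const, Real.volume_Icc, sub_zero, ← ENNReal.ofReal_mul (by positivity)]
        ring_nf
    _ ≤ _ := by
        refine lintegral_mono fun s => ENNReal.ofReal_le_ofReal ?_
        linarith [half_le_f_add_W hε hε1.le (η s), sq_nonneg |η' s|]
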